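/- Let u be a classical solution of the forward problem, and write ‖F‖² := ∫₀^T ∫₀^ℓ F(x,t)² dx dt. Then for every t ∈ [0, T], ∫₀^ℓ (∂ₜu(x,t))² dx ≤ (1/ρ₀) exp(t/ρ₀) ‖F‖². In particular, the first estimate of Theorem 1 holds: sup over t ∈ [0,T] of ∫₀^ℓ (∂ₜu(x,t))² dx is at most (1/ρ₀) C_e² ‖F‖², where C_e² := exp(T/ρ₀). -/

import Mathlib

open Set

/-- A classical solution of the forward problem for the damped Euler–Bernoulli beam
equation `ρ_A(x) uₜₜ + μ(x) uₜ − (T_r(x) uₓ)ₓ + (r(x) uₓₓ + κ(x) uₓₓₜ)ₓₓ = F(x,t)` on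
`(0,ℓ) × (0,T)`, with homogeneous initial conditions and simply supported boundary
conditions.  The fields `ux, uxx, ut, utt, uxt, uxxt` are the partial derivatives of
`u`, `Ax` is the spatial derivative of `T_r(x) uₓ`, and `Bx, Bxx` are the first and
second spatial derivatives of the bending moment `B(x,t) = r(x) uₓₓ + κ(x) uₓₓₜ`. -/
structure ForwardSol (ℓ T : ℝ) (ρA μ Tr r κ : ℝ → ℝ) (F : ℝ → ℝ → ℝ) where
  u : ℝ → ℝ → ℝ
  ux : ℝ → ℝ → ℝ
  uxx : ℝ → ℝ → ℝ
  ut : ℝ → ℝ → ℝ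
  utt : ℝ → ℝ → ℝ
  uxt : ℝ → ℝ → ℝ
  uxxt : ℝ → ℝ → ℝ
  Ax : ℝ → ℝ → ℝ
  Bx : ℝ → ℝ → ℝ
  Bxx : ℝ → ℝ → ℝ
  smooth : ContDiffOn ℝ (⊤ : ℕ∞) (fun p : ℝ × ℝ => u p.1 p.2) (Icc 0 ℓ ×ˢ Icc 0 T)
  hux : ∀ x ∈ Icc (0:ℝ) ℓ, ∀ t ∈ Icc (0:ℝ) T, HasDerivAt (fun y => u y t) (ux x t) x
  huxx : ∀ x ∈ Icc (0:ℝ) ℓ, ∀ t ∈ Icc (0:ℝ) T, HasDerivAt (fun y => ux y t) (uxx x t) x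
  hut : ∀ x ∈ Icc (0:ℝ) ℓ, ∀ t ∈ Icc (0:ℝ) T, HasDerivAt (fun s => u x s) (ut x t) t
  hutt : ∀ x ∈ Icc (0:ℝ) ℓ, ∀ t ∈ Icc (0:ℝ) T, HasDerivAt (fun s => ut x s) (utt x t) t
  huxt : ∀ x ∈ Icc (0:ℝ) ℓ, ∀ t ∈ Icc (0:ℝ) T, HasDerivAt (fun s => ux x s) (uxt x t) t
  huxxt : ∀ x ∈ Icc (0:ℝ) ℓ, ∀ t ∈ Icc (0:ℝ) T, HasDerivAt (fun s => uxx x s) (uxxt x t) t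
  hAx : ∀ x ∈ Icc (0:ℝ) ℓ, ∀ t ∈ Icc (0:ℝ) T,
    HasDerivAt (fun y => Tr y * ux y t) (Ax x t) x
  hBx : ∀ x ∈ Icc (0:ℝ) ℓ, ∀ t ∈ Icc (0:ℝ) T,
    HasDerivAt (fun y => r y * uxx y t + κ y * uxxt y t) (Bx x t) x
  hBxx : ∀ x ∈ Icc (0:ℝ) ℓ, ∀ t ∈ Icc (0:ℝ) T, HasDerivAt (fun y => Bx y t) (Bxx x t) x
  cont_ux : ContinuousOn (fun p : ℝ × ℝ => ux p.1 p.2) (Icc 0 ℓ ×ˢ Icc 0 T)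
  cont_uxx : ContinuousOn (fun p : ℝ × ℝ => uxx p.1 p.2) (Icc 0 ℓ ×ˢ Icc 0 T)
  cont_ut : ContinuousOn (fun p : ℝ × ℝ => ut p.1 p.2) (Icc 0 ℓ ×ˢ Icc 0 T)
  cont_utt : ContinuousOn (fun p : ℝ × ℝ => utt p.1 p.2) (Icc 0 ℓ ×ˢ Icc 0 T)
  cont_uxt : ContinuousOn (fun p : ℝ × ℝ => uxt p.1 p.2) (Icc 0 ℓ ×ˢ Icc 0 T)
  cont_uxxt : ContinuousOn (fun p : ℝ × ℝ => uxxt p.1 p.2) (Icc 0 ℓ ×ˢ Icc 0 T)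
  cont_Ax : ContinuousOn (fun p : ℝ × ℝ => Ax p.1 p.2) (Icc 0 ℓ ×ˢ Icc 0 T)
  cont_Bx : ContinuousOn (fun p : ℝ × ℝ => Bx p.1 p.2) (Icc 0 ℓ ×ˢ Icc 0 T)
  cont_Bxx : ContinuousOn (fun p : ℝ × ℝ => Bxx p.1 p.2) (Icc 0 ℓ ×ˢ Icc 0 T)
  pde : ∀ x ∈ Ioo (0:ℝ) ℓ, ∀ t ∈ Ioo (0:ℝ) T,
    ρA x * utt x t + μ x * ut x t - Ax x t + Bxx x t = F x t
  init_u : ∀ x ∈ Ioo (0:ℝ) ℓ, u x 0 = 0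
  init_ut : ∀ x ∈ Ioo (0:ℝ) ℓ, ut x 0 = 0
  bc_u0 : ∀ t ∈ Icc (0:ℝ) T, u 0 t = 0
  bc_ul : ∀ t ∈ Icc (0:ℝ) T, u ℓ t = 0
  bc_m0 : ∀ t ∈ Icc (0:ℝ) T, r 0 * uxx 0 t + κ 0 * uxxt 0 t = 0
  bc_ml : ∀ t ∈ Icc (0:ℝ) T, r ℓ * uxx ℓ t + κ ℓ * uxxt ℓ t = 0

/-!
Multiplying the equation by `2 uₜ` and integrating over `(0, ℓ)`, the boundary terms of the
integrations by parts vanish for a simply supported beam, so the energy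
`E(t) = ∫ ρ_A uₜ² + T_r uₓ² + r uₓₓ²` satisfies
`E' = ∫ 2 F uₜ - 2 μ uₜ² - 2 κ uₓₓₜ² ≤ E / ρ₀ + ∫ F²` with `E(0) = 0`.
Grönwall's inequality in integral form then gives `E(t) ≤ exp (t / ρ₀) ‖F‖²`, and
`ρ₀ ∫ uₜ² ≤ E`. The integration by parts needs `∂ₓ uₜ = uₓₜ`, obtained from the continuity of
`uₓₜ` by passing to the limit in the time difference quotients of `u`, whose `x`-derivatives
converge uniformly.
-/

open MeasureTheory Filter Topology Function

lemma ContinuousOn.comp_fst_prod {α β γ : Type*} [TopologicalSpace α] [TopologicalSpace β]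
    [TopologicalSpace γ] {f : α → γ} {s : Set α} (hf : ContinuousOn f s) (t : Set β) :
    ContinuousOn (fun p : α × β => f p.1) (s ×ˢ t) :=
  hf.comp continuousOn_fst fun _ hp => hp.1

lemma uniformContinuousOn_Ioo_prod {f : ℝ → ℝ → ℝ} {a b c d : ℝ}
    (hf : ContinuousOn (uncurry f) (Icc a b ×ˢ Icc c d)) :
    UniformContinuousOn (uncurry f) (Ioo a b ×ˢ Ioo c d) :=
  ((isCompact_Icc.prod isCompact_Icc).uniformContinuousOn_of_continuous hf).mono
    (prod_mono Ioo_subset_Icc_self Ioo_subset_Icc_self)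

lemma HasDerivAt.eq_zero_of_eqOn_zero {f : ℝ → ℝ} {f' x : ℝ} {s : Set ℝ}
    (hf : HasDerivAt f f' x) (hs : s ∈ 𝓝 x) (h : EqOn f 0 s) : f' = 0 :=
  hf.unique ((hasDerivAt_const x 0).congr_of_eventuallyEq (eventuallyEq_of_mem hs h))

lemma ContinuousOn.intervalIntegral_Icc_prod {f : ℝ → ℝ → ℝ} {a b c d : ℝ} (hab : a ≤ b)
    (hf : ContinuousOn (uncurry f) (Icc a b ×ˢ Icc c d)) :
    ContinuousOn (fun t => ∫ x in a..b, f x t) (Icc c d) := by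
  rcases lt_or_ge d c with hdc | hcd
  · simp [Icc_eq_empty_of_lt hdc]
  -- clamping both variables to the rectangle gives a globally continuous integrand
  set g : ℝ → ℝ → ℝ := fun t x => f (projIcc a b hab x) (projIcc c d hcd t)
  have hg : Continuous (uncurry g) :=
    hf.comp_continuous
      (f := fun p : ℝ × ℝ => ((projIcc a b hab p.2 : ℝ), (projIcc c d hcd p.1 : ℝ)))
      (by fun_prop) fun p => ⟨(projIcc a b hab p.2).2, (projIcc c d hcd p.1).2⟩
  refine (intervalIntegral.continuous_parametric_intervalIntegral_of_continuous' hg a b)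
    |>.continuousOn.congr fun t ht => intervalIntegral.integral_congr fun x hx => ?_
  rw [uIcc_of_le hab] at hx
  simp [g, projIcc_of_mem _ hx, projIcc_of_mem _ ht]

lemma tendstoUniformlyOn_slope_of_hasDerivAt {f f' : ℝ → ℝ → ℝ} {K : Set ℝ} {c d s : ℝ}
    (hf : ∀ y ∈ K, ∀ t ∈ Ioo c d, HasDerivAt (f y) (f' y t) t)
    (hf' : UniformContinuousOn (uncurry f') (K ×ˢ Ioo c d)) (hs : s ∈ Ioo c d) :
    TendstoUniformlyOn (fun δ y => δ⁻¹ * (f y (s + δ) - f y s)) (fun y => f' y s)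
      (𝓝[≠] 0) K := by
  rw [Metric.tendstoUniformlyOn_iff]
  intro ε hε
  obtain ⟨η, hη, hf'η⟩ := Metric.uniformContinuousOn_iff.1 hf' (ε / 2) (half_pos hε)
  have habs := continuous_abs.tendsto' (0 : ℝ) 0 abs_zero
  have hsmall : ∀ᶠ δ in 𝓝[≠] (0 : ℝ), δ ≠ 0 ∧ |δ| < η ∧ |δ| < s - c ∧ |δ| < d - s :=
    eventually_mem_nhdsWithin.and <| nhdsWithin_le_nhds <|
      (habs.eventually (eventually_lt_nhds hη)).and <|
      (habs.eventually (eventually_lt_nhds (sub_pos.2 hs.1))).and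
      (habs.eventually (eventually_lt_nhds (sub_pos.2 hs.2)))
  filter_upwards [hsmall] with δ ⟨hδ, hδη, hδc, hδd⟩ y hy
  have hnear : ∀ t ∈ uIcc s (s + δ), t ∈ Ioo c d ∧ |t - s| < η := by
    intro t ht
    have := abs_sub_left_of_mem_uIcc ht
    rw [add_sub_cancel_left] at this
    refine ⟨⟨?_, ?_⟩, by linarith⟩ <;> linarith [abs_le.1 this, abs_lt.1 hδc, abs_lt.1 hδd]
  -- mean value inequality for `t ↦ f y t - t * f' y s` on the segment from `s` to `s + δ`
  have hmvt := Convex.norm_image_sub_le_of_norm_hasDerivWithin_le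
    (f := fun t => f y t - t * f' y s) (f' := fun t => f' y t - f' y s) (C := ε / 2)
    (fun t ht => (((hf y hy t (hnear t ht).1).sub ((hasDerivAt_id t).mul_const _)).congr_deriv
      (by simp)).hasDerivWithinAt)
    (fun t ht => by
      have := hf'η (y, t) ⟨hy, (hnear t ht).1⟩ (y, s) ⟨hy, hs⟩
        (by simpa [Prod.dist_eq, Real.dist_eq] using (hnear t ht).2)
      simpa [Real.dist_eq, abs_sub_comm] using this.le)
    (convex_uIcc s (s + δ)) left_mem_uIcc right_mem_uIcc
  have hδ' : 0 < |δ| := abs_pos.2 hδ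
  rw [Real.dist_eq]
  calc |f' y s - δ⁻¹ * (f y (s + δ) - f y s)|
      = |f y (s + δ) - (s + δ) * f' y s - (f y s - s * f' y s)| / |δ| := by
        rw [abs_sub_comm, eq_div_iff hδ'.ne', ← abs_mul]; congr 1; field_simp; ring
    _ ≤ ε / 2 * |δ| / |δ| := by gcongr; simpa using hmvt
    _ < ε := by rw [mul_div_cancel_right₀ _ hδ'.ne']; linarith

lemma hasDerivAt_of_hasDerivAt_mixed {v vx vt vxt : ℝ → ℝ → ℝ} {a b c d x s : ℝ}
    (hvx : ∀ y ∈ Ioo a b, ∀ t ∈ Ioo c d, HasDerivAt (v · t) (vx y t) y)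
    (hvt : ∀ y ∈ Ioo a b, HasDerivAt (v y) (vt y s) s)
    (hvxt : ∀ y ∈ Ioo a b, ∀ t ∈ Ioo c d, HasDerivAt (vx y) (vxt y t) t)
    (hc : UniformContinuousOn (uncurry vxt) (Ioo a b ×ˢ Ioo c d))
    (hx : x ∈ Ioo a b) (hs : s ∈ Ioo c d) :
    HasDerivAt (vt · s) (vxt x s) x := by
  have hshift : ∀ᶠ δ in 𝓝[≠] (0 : ℝ), s + δ ∈ Ioo c d :=
    nhdsWithin_le_nhds <| (continuous_const_add s).continuousAt.preimage_mem_nhds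
      (by simpa using isOpen_Ioo.mem_nhds hs)
  refine hasDerivAt_of_tendstoUniformlyOn (f := fun δ y => δ⁻¹ * (v y (s + δ) - v y s))
    isOpen_Ioo (tendstoUniformlyOn_slope_of_hasDerivAt hvxt hc hs) ?_ ?_ hx
  · filter_upwards [hshift] with δ hδ y hy
    exact ((hvx y hy _ hδ).sub (hvx y hy s hs)).const_mul δ⁻¹
  · intro y hy
    simpa using (hvt y hy).tendsto_slope_zero

lemma integral_sub_integral_eq_integral_integral_of_hasDerivAt {g h : ℝ → ℝ → ℝ}
    {a b c d : ℝ} (hab : a ≤ b) (hcd : c ≤ d)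
    (hg : ∀ x ∈ Icc a b, ∀ t ∈ Ioo c d, HasDerivAt (g x) (h x t) t)
    (hgc : ContinuousOn (uncurry g) (Icc a b ×ˢ Icc c d))
    (hhc : ContinuousOn (uncurry h) (Icc a b ×ˢ Icc c d)) :
    (∫ x in a..b, g x d) - ∫ x in a..b, g x c = ∫ t in c..d, ∫ x in a..b, h x t := by
  have hslice : ∀ t ∈ Icc c d, IntervalIntegrable (g · t) volume a b := fun t ht =>
    (hgc.uncurry_right t ht).intervalIntegrable_of_Icc hab
  rw [← intervalIntegral.integral_sub (hslice d (right_mem_Icc.2 hcd))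
      (hslice c (left_mem_Icc.2 hcd)),
    ← intervalIntegral_intervalIntegral_swap (hhc.integrableOn_compact
      (isCompact_Icc.prod isCompact_Icc) |>.mono_set (by
        rw [uIoc_of_le hab, uIoc_of_le hcd]
        exact prod_mono Ioc_subset_Icc_self Ioc_subset_Icc_self))]
  refine intervalIntegral.integral_congr fun x hx => ?_
  rw [uIcc_of_le hab] at hx
  exact (intervalIntegral.integral_eq_sub_of_hasDerivAt_of_le hcd (hgc.uncurry_left x hx)
    (hg x hx) ((hhc.uncurry_left x hx).intervalIntegrable_of_Icc hcd)).symm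

lemma le_mul_exp_of_le_add_mul_integral {φ : ℝ → ℝ} {a b C K t : ℝ} (hK : 0 ≤ K)
    (hφ : ContinuousOn φ (Icc a b)) (h : ∀ t ∈ Icc a b, φ t ≤ C + K * ∫ s in a..t, φ s)
    (ht : t ∈ Icc a b) : φ t ≤ C * Real.exp (K * (t - a)) := by
  set W : ℝ → ℝ := fun t => C + K * ∫ s in a..t, φ s
  have hab : a ≤ b := ht.1.trans ht.2
  have hW : ContinuousOn W (Icc a b) := by
    have := intervalIntegral.continuousOn_primitive_interval (μ := volume)
      ((uIcc_of_le hab).symm ▸ hφ.integrableOn_Icc)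
    rw [uIcc_of_le hab] at this
    exact continuousOn_const.add (continuousOn_const.mul this)
  have hW' : ∀ t ∈ Ioo a b, HasDerivAt W (K * φ t) t := fun t ht =>
    ((intervalIntegral.integral_hasDerivAt_right
      ((hφ.mono (Icc_subset_Icc le_rfl ht.2.le)).intervalIntegrable_of_Icc ht.1.le)
      ((hφ.mono Ioo_subset_Icc_self).stronglyMeasurableAtFilter isOpen_Ioo t ht)
      (hφ.continuousAt (Icc_mem_nhds ht.1 ht.2))).const_mul K).const_add C
  -- `exp (-K (t - a)) * W t` is antitone because `W' = K φ ≤ K W`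
  have hanti : AntitoneOn (fun t => Real.exp (-(K * (t - a))) * W t) (Icc a b) := by
    refine antitoneOn_of_hasDerivWithinAt_nonpos (convex_Icc a b)
      ((by fun_prop : Continuous fun t => Real.exp (-(K * (t - a)))).continuousOn.mul hW)
      (f' := fun t => Real.exp (-(K * (t - a))) * (K * (φ t - W t))) ?_ ?_
    · intro t ht
      rw [interior_Icc] at ht
      have hexp : HasDerivAt (fun t => Real.exp (-(K * (t - a))))
          (Real.exp (-(K * (t - a))) * -K) t := by
        simpa using (((hasDerivAt_id t).sub_const a).const_mul K).neg.exp
      exact ((hexp.mul (hW' t ht)).congr_deriv (by ring)).hasDerivWithinAt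
    · intro t ht
      rw [interior_Icc] at ht
      have := h t (Ioo_subset_Icc_self ht)
      have := Real.exp_pos (-(K * (t - a)))
      have : K * (φ t - W t) ≤ 0 := mul_nonpos_of_nonneg_of_nonpos hK (by linarith)
      nlinarith
  have hWt := hanti (left_mem_Icc.2 hab) ht ht.1
  simp only [sub_self, mul_zero, neg_zero, Real.exp_zero, one_mul, W,
    intervalIntegral.integral_same, add_zero] at hWt
  calc φ t ≤ W t := h t ht
    _ = Real.exp (K * (t - a)) * (Real.exp (-(K * (t - a))) * W t) := by
        rw [← mul_assoc, ← Real.exp_add, add_neg_cancel, Real.exp_zero, one_mul]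
    _ ≤ C * Real.exp (K * (t - a)) := by
        rw [mul_comm C]; exact mul_le_mul_of_nonneg_left hWt (Real.exp_pos _).le

namespace ForwardSol

variable {ℓ T : ℝ} {ρA μ Tr r κ : ℝ → ℝ} {F : ℝ → ℝ → ℝ} (sol : ForwardSol ℓ T ρA μ Tr r κ F)

def energyDensity (x t : ℝ) : ℝ :=
  ρA x * sol.ut x t ^ 2 + Tr x * sol.ux x t ^ 2 + r x * sol.uxx x t ^ 2

def energyDensityDeriv (x t : ℝ) : ℝ :=
  2 * (ρA x * sol.ut x t * sol.utt x t + Tr x * sol.ux x t * sol.uxt x t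
    + r x * sol.uxx x t * sol.uxxt x t)

noncomputable def energy (t : ℝ) : ℝ := ∫ x in (0:ℝ)..ℓ, sol.energyDensity x t

def energyFlux (x t : ℝ) : ℝ :=
  2 * sol.ut x t * (Tr x * sol.ux x t - sol.Bx x t)
    + 2 * sol.uxt x t * (r x * sol.uxx x t + κ x * sol.uxxt x t)

-- power of the load minus the viscous and Kelvin–Voigt dissipation
def netPower (x t : ℝ) : ℝ :=
  2 * sol.ut x t * F x t - 2 * μ x * sol.ut x t ^ 2 - 2 * κ x * sol.uxxt x t ^ 2

lemma ux_initial (hT : 0 ≤ T) {x : ℝ} (hx : x ∈ Ioo 0 ℓ) : sol.ux x 0 = 0 :=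
  (sol.hux x (Ioo_subset_Icc_self hx) 0 ⟨le_rfl, hT⟩).eq_zero_of_eqOn_zero
    (Ioo_mem_nhds hx.1 hx.2) sol.init_u

lemma uxx_initial (hT : 0 ≤ T) {x : ℝ} (hx : x ∈ Ioo 0 ℓ) : sol.uxx x 0 = 0 :=
  (sol.huxx x (Ioo_subset_Icc_self hx) 0 ⟨le_rfl, hT⟩).eq_zero_of_eqOn_zero
    (Ioo_mem_nhds hx.1 hx.2) fun _ hy => sol.ux_initial hT hy

lemma hasDerivAt_energyDensity {x t : ℝ} (hx : x ∈ Icc 0 ℓ) (ht : t ∈ Icc 0 T) :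
    HasDerivAt (sol.energyDensity x) (sol.energyDensityDeriv x t) t := by
  have := ((((sol.hutt x hx t ht).fun_pow 2).const_mul (ρA x)).fun_add
    (((sol.huxt x hx t ht).fun_pow 2).const_mul (Tr x))).fun_add
    (((sol.huxxt x hx t ht).fun_pow 2).const_mul (r x))
  exact this.congr_deriv (by simp only [energyDensityDeriv]; norm_num; ring)

lemma hasDerivAt_ut_x {x s : ℝ} (hx : x ∈ Ioo 0 ℓ) (hs : s ∈ Ioo 0 T) :
    HasDerivAt (sol.ut · s) (sol.uxt x s) x :=
  hasDerivAt_of_hasDerivAt_mixed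
    (fun y hy t ht => sol.hux y (Ioo_subset_Icc_self hy) t (Ioo_subset_Icc_self ht))
    (fun y hy => sol.hut y (Ioo_subset_Icc_self hy) s (Ioo_subset_Icc_self hs))
    (fun y hy t ht => sol.huxt y (Ioo_subset_Icc_self hy) t (Ioo_subset_Icc_self ht))
    (uniformContinuousOn_Ioo_prod sol.cont_uxt) hx hs

lemma hasDerivAt_uxt_x {x s : ℝ} (hx : x ∈ Ioo 0 ℓ) (hs : s ∈ Ioo 0 T) :
    HasDerivAt (sol.uxt · s) (sol.uxxt x s) x :=
  hasDerivAt_of_hasDerivAt_mixed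
    (fun y hy t ht => sol.huxx y (Ioo_subset_Icc_self hy) t (Ioo_subset_Icc_self ht))
    (fun y hy => sol.huxt y (Ioo_subset_Icc_self hy) s (Ioo_subset_Icc_self hs))
    (fun y hy t ht => sol.huxxt y (Ioo_subset_Icc_self hy) t (Ioo_subset_Icc_self ht))
    (uniformContinuousOn_Ioo_prod sol.cont_uxxt) hx hs

lemma hasDerivAt_energyFlux {x s : ℝ} (hx : x ∈ Ioo 0 ℓ) (hs : s ∈ Ioo 0 T) :
    HasDerivAt (sol.energyFlux · s) (sol.energyDensityDeriv x s - sol.netPower x s) x := by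
  have hxI := Ioo_subset_Icc_self hx
  have hsI := Ioo_subset_Icc_self hs
  have := (((sol.hasDerivAt_ut_x hx hs).const_mul 2).fun_mul
      ((sol.hAx x hxI s hsI).fun_sub (sol.hBxx x hxI s hsI))).fun_add
    (((sol.hasDerivAt_uxt_x hx hs).const_mul 2).fun_mul (sol.hBx x hxI s hsI))
  exact this.congr_deriv (by
    simp only [energyDensityDeriv, netPower]
    linear_combination (-2 * sol.ut x s) * sol.pde x hx s hs)

section Estimates

variable (hℓ : 0 ≤ ℓ) (hρA : ContinuousOn ρA (Icc 0 ℓ)) (hμ : ContinuousOn μ (Icc 0 ℓ))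
  (hTr : ContinuousOn Tr (Icc 0 ℓ)) (hr : ContinuousOn r (Icc 0 ℓ))
  (hκ : ContinuousOn κ (Icc 0 ℓ))
  (hF : ContinuousOn (fun p : ℝ × ℝ => F p.1 p.2) (Icc 0 ℓ ×ˢ Icc 0 T))
  {ρ₀ : ℝ} (hρ₀ : 0 < ρ₀) (hρAb : ∀ x ∈ Icc 0 ℓ, ρ₀ ≤ ρA x) (hμb : ∀ x ∈ Icc 0 ℓ, 0 ≤ μ x)
  (hTrb : ∀ x ∈ Icc 0 ℓ, 0 ≤ Tr x) (hrb : ∀ x ∈ Icc 0 ℓ, 0 ≤ r x)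
  (hκb : ∀ x ∈ Icc 0 ℓ, 0 ≤ κ x)

include hℓ in
lemma ut_left_eq_zero {s : ℝ} (hs : s ∈ Ioo 0 T) : sol.ut 0 s = 0 :=
  (sol.hut 0 ⟨le_rfl, hℓ⟩ s (Ioo_subset_Icc_self hs)).eq_zero_of_eqOn_zero
    (Icc_mem_nhds hs.1 hs.2) sol.bc_u0

include hℓ in
lemma ut_right_eq_zero {s : ℝ} (hs : s ∈ Ioo 0 T) : sol.ut ℓ s = 0 :=
  (sol.hut ℓ ⟨hℓ, le_rfl⟩ s (Ioo_subset_Icc_self hs)).eq_zero_of_eqOn_zero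
    (Icc_mem_nhds hs.1 hs.2) sol.bc_ul

include hℓ in
lemma energy_zero (hT : 0 ≤ T) : sol.energy 0 = 0 := by
  rw [energy, intervalIntegral.integral_congr_Ioo_of_le hℓ (g := 0) fun x hx => by
    simp [energyDensity, sol.init_ut x hx, sol.ux_initial hT hx, sol.uxx_initial hT hx]]
  simp

include hρA hTr hr in
lemma continuousOn_energyDensity :
    ContinuousOn (uncurry sol.energyDensity) (Icc 0 ℓ ×ˢ Icc 0 T) :=
  (((hρA.comp_fst_prod _).mul (sol.cont_ut.pow 2)).add
    ((hTr.comp_fst_prod _).mul (sol.cont_ux.pow 2))).add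
    ((hr.comp_fst_prod _).mul (sol.cont_uxx.pow 2))

include hρA hTr hr in
lemma continuousOn_energyDensityDeriv :
    ContinuousOn (uncurry sol.energyDensityDeriv) (Icc 0 ℓ ×ˢ Icc 0 T) :=
  continuousOn_const.mul (((((hρA.comp_fst_prod _).mul sol.cont_ut).mul sol.cont_utt).add
    (((hTr.comp_fst_prod _).mul sol.cont_ux).mul sol.cont_uxt)).add
    (((hr.comp_fst_prod _).mul sol.cont_uxx).mul sol.cont_uxxt))

include hμ hκ hF in
lemma continuousOn_netPower {s : ℝ} (hs : s ∈ Icc 0 T) :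
    ContinuousOn (sol.netPower · s) (Icc 0 ℓ) :=
  (((continuousOn_const.mul (sol.cont_ut.uncurry_right s hs)).mul (hF.uncurry_right s hs)).sub
    ((continuousOn_const.mul hμ).mul ((sol.cont_ut.uncurry_right s hs).pow 2))).sub
    ((continuousOn_const.mul hκ).mul ((sol.cont_uxxt.uncurry_right s hs).pow 2))

include hℓ hρA hTr hr in
lemma energy_eq_integral {t : ℝ} (ht : t ∈ Icc 0 T) :
    sol.energy t = ∫ s in (0:ℝ)..t, ∫ x in (0:ℝ)..ℓ, sol.energyDensityDeriv x s := by
  have hsub : Icc 0 ℓ ×ˢ Icc 0 t ⊆ Icc 0 ℓ ×ˢ Icc (0:ℝ) T :=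
    prod_mono subset_rfl (Icc_subset_Icc le_rfl ht.2)
  rw [← integral_sub_integral_eq_integral_integral_of_hasDerivAt hℓ ht.1
    (fun x hx s hs => sol.hasDerivAt_energyDensity hx ⟨hs.1.le, hs.2.le.trans ht.2⟩)
    ((sol.continuousOn_energyDensity hρA hTr hr).mono hsub)
    ((sol.continuousOn_energyDensityDeriv hρA hTr hr).mono hsub),
    ← energy, ← energy, sol.energy_zero hℓ (ht.1.trans ht.2), sub_zero]

include hℓ hρA hμ hTr hr hκ hF in
lemma integral_energyDensityDeriv_eq {s : ℝ} (hs : s ∈ Ioo 0 T) :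
    ∫ x in (0:ℝ)..ℓ, sol.energyDensityDeriv x s = ∫ x in (0:ℝ)..ℓ, sol.netPower x s := by
  have hsI := Ioo_subset_Icc_self hs
  have slice : ∀ {f : ℝ → ℝ → ℝ}, ContinuousOn (fun p : ℝ × ℝ => f p.1 p.2)
      (Icc 0 ℓ ×ˢ Icc 0 T) → ContinuousOn (f · s) (Icc 0 ℓ) := fun h => h.uncurry_right s hsI
  have hflux : ContinuousOn (sol.energyFlux · s) (Icc 0 ℓ) :=
    ((continuousOn_const.mul (slice sol.cont_ut)).mul
      ((hTr.mul (slice sol.cont_ux)).sub (slice sol.cont_Bx))).add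
    ((continuousOn_const.mul (slice sol.cont_uxt)).mul
      ((hr.mul (slice sol.cont_uxx)).add (hκ.mul (slice sol.cont_uxxt))))
  have hpower := sol.continuousOn_netPower hμ hκ hF hsI
  have hderiv := (sol.continuousOn_energyDensityDeriv hρA hTr hr).uncurry_right s hsI
  have hbalance := intervalIntegral.integral_eq_sub_of_hasDerivAt_of_le hℓ hflux
    (fun x hx => sol.hasDerivAt_energyFlux hx hs)
    ((hderiv.sub hpower).intervalIntegrable_of_Icc hℓ)
  rw [intervalIntegral.integral_sub (hderiv.intervalIntegrable_of_Icc hℓ)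
    (hpower.intervalIntegrable_of_Icc hℓ)] at hbalance
  -- the flux vanishes at both ends: there `uₜ = 0` and the bending moment is zero
  simp only [energyFlux, sol.ut_left_eq_zero hℓ hs, sol.ut_right_eq_zero hℓ hs,
    sol.bc_m0 s hsI, sol.bc_ml s hsI, mul_zero, zero_mul, add_zero, sub_self] at hbalance
  exact sub_eq_zero.1 hbalance

include hℓ hρA hTr hr hρ₀ hρAb hTrb hrb in
lemma integral_ut_sq_le_energy_div {t : ℝ} (ht : t ∈ Icc 0 T) :
    ∫ x in (0:ℝ)..ℓ, sol.ut x t ^ 2 ≤ sol.energy t / ρ₀ := by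
  rw [le_div_iff₀' hρ₀, ← intervalIntegral.integral_const_mul]
  refine intervalIntegral.integral_mono_on hℓ
    ((continuousOn_const.mul ((sol.cont_ut.uncurry_right t ht).pow 2)).intervalIntegrable_of_Icc hℓ)
    (((sol.continuousOn_energyDensity hρA hTr hr).uncurry_right t ht).intervalIntegrable_of_Icc hℓ)
    fun x hx => ?_
  have := mul_le_mul_of_nonneg_right (hρAb x hx) (sq_nonneg (sol.ut x t))
  have := mul_nonneg (hTrb x hx) (sq_nonneg (sol.ux x t))
  have := mul_nonneg (hrb x hx) (sq_nonneg (sol.uxx x t))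
  simp only [energyDensity]
  linarith

include hℓ hρA hμ hTr hr hκ hF hρ₀ hρAb hμb hTrb hrb hκb in
lemma integral_energyDensityDeriv_le {s : ℝ} (hs : s ∈ Ioo 0 T) :
    ∫ x in (0:ℝ)..ℓ, sol.energyDensityDeriv x s
      ≤ sol.energy s / ρ₀ + ∫ x in (0:ℝ)..ℓ, F x s ^ 2 := by
  have hsI := Ioo_subset_Icc_self hs
  have hut2 : IntervalIntegrable (fun x => sol.ut x s ^ 2) volume 0 ℓ :=
    ((sol.cont_ut.uncurry_right s hsI).pow 2).intervalIntegrable_of_Icc hℓ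
  have hF2 : IntervalIntegrable (fun x => F x s ^ 2) volume 0 ℓ :=
    ((hF.uncurry_right s hsI).pow 2).intervalIntegrable_of_Icc hℓ
  have hkinetic := sol.integral_ut_sq_le_energy_div hℓ hρA hTr hr hρ₀ hρAb hTrb hrb hsI
  rw [sol.integral_energyDensityDeriv_eq hℓ hρA hμ hTr hr hκ hF hs]
  calc ∫ x in (0:ℝ)..ℓ, sol.netPower x s
      ≤ ∫ x in (0:ℝ)..ℓ, (sol.ut x s ^ 2 + F x s ^ 2) :=
        intervalIntegral.integral_mono_on hℓ
          ((sol.continuousOn_netPower hμ hκ hF hsI).intervalIntegrable_of_Icc hℓ)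
          (hut2.add hF2) fun x hx => by
            have := mul_nonneg (hμb x hx) (sq_nonneg (sol.ut x s))
            have := mul_nonneg (hκb x hx) (sq_nonneg (sol.uxxt x s))
            have := sq_nonneg (sol.ut x s - F x s)
            simp only [netPower]
            nlinarith
    _ ≤ sol.energy s / ρ₀ + ∫ x in (0:ℝ)..ℓ, F x s ^ 2 := by
        rw [intervalIntegral.integral_add hut2 hF2]
        linarith

include hℓ hρA hTr hr in
lemma continuousOn_energy : ContinuousOn sol.energy (Icc 0 T) :=
  (sol.continuousOn_energyDensity hρA hTr hr).intervalIntegral_Icc_prod hℓ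

include hℓ hρA hμ hTr hr hκ hF hρ₀ hρAb hμb hTrb hrb hκb in
lemma energy_le_add_integral_energy {t : ℝ} (ht : t ∈ Icc 0 T) :
    sol.energy t ≤ (∫ s in (0:ℝ)..T, ∫ x in (0:ℝ)..ℓ, F x s ^ 2)
      + 1 / ρ₀ * ∫ s in (0:ℝ)..t, sol.energy s := by
  have hsub : Icc 0 t ⊆ Icc (0:ℝ) T := Icc_subset_Icc le_rfl ht.2
  have hf : ContinuousOn (fun s => ∫ x in (0:ℝ)..ℓ, F x s ^ 2) (Icc 0 T) :=
    ContinuousOn.intervalIntegral_Icc_prod (f := fun x s => F x s ^ 2) hℓ (hF.pow 2)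
  have hEt := ((sol.continuousOn_energy hℓ hρA hTr hr).mono hsub).intervalIntegrable_of_Icc
    (μ := volume) ht.1
  have hft := (hf.mono hsub).intervalIntegrable_of_Icc (μ := volume) ht.1
  have hfT := intervalIntegral.integral_mono_interval le_rfl ht.1 ht.2
    (Eventually.of_forall fun s => intervalIntegral.integral_nonneg hℓ fun x _ =>
      sq_nonneg (F x s))
    (hf.intervalIntegrable_of_Icc (μ := volume) (ht.1.trans ht.2))
  calc sol.energy t = ∫ s in (0:ℝ)..t, ∫ x in (0:ℝ)..ℓ, sol.energyDensityDeriv x s :=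
        sol.energy_eq_integral hℓ hρA hTr hr ht
    _ ≤ ∫ s in (0:ℝ)..t, (sol.energy s / ρ₀ + ∫ x in (0:ℝ)..ℓ, F x s ^ 2) :=
        intervalIntegral.integral_mono_on_of_le_Ioo ht.1
          (((sol.continuousOn_energyDensityDeriv hρA hTr hr).intervalIntegral_Icc_prod hℓ
            |>.mono hsub).intervalIntegrable_of_Icc ht.1) ((hEt.div_const ρ₀).add hft)
          fun s hs => sol.integral_energyDensityDeriv_le hℓ hρA hμ hTr hr hκ hF hρ₀ hρAb hμb
            hTrb hrb hκb ⟨hs.1, hs.2.trans_le ht.2⟩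
    _ = 1 / ρ₀ * (∫ s in (0:ℝ)..t, sol.energy s)
          + ∫ s in (0:ℝ)..t, ∫ x in (0:ℝ)..ℓ, F x s ^ 2 := by
        rw [intervalIntegral.integral_add (hEt.div_const ρ₀) hft, intervalIntegral.integral_div]
        ring
    _ ≤ _ := by linarith

include hℓ hρA hμ hTr hr hκ hF hρ₀ hρAb hμb hTrb hrb hκb in
lemma energy_le_mul_exp {t : ℝ} (ht : t ∈ Icc 0 T) :
    sol.energy t ≤ (∫ s in (0:ℝ)..T, ∫ x in (0:ℝ)..ℓ, F x s ^ 2) * Real.exp (t / ρ₀) := by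
  simpa [div_eq_inv_mul] using le_mul_exp_of_le_add_mul_integral (by positivity)
    (sol.continuousOn_energy hℓ hρA hTr hr)
    (fun t ht => sol.energy_le_add_integral_energy hℓ hρA hμ hTr hr hκ hF hρ₀ hρAb hμb hTrb hrb
      hκb ht) ht

end Estimates

end ForwardSol

theorem velocity_energy_estimate_general
    (ℓ T ρ₀ r₀ κ₀ : ℝ) (hℓ : 0 < ℓ)
    (hρ₀ : 0 < ρ₀) (hr₀ : 0 < r₀) (hκ₀ : 0 < κ₀)
    (ρA μ Tr r κ : ℝ → ℝ) (F : ℝ → ℝ → ℝ)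
    (hρA : ContDiffOn ℝ (⊤ : ℕ∞) ρA (Icc 0 ℓ))
    (hμ : ContDiffOn ℝ (⊤ : ℕ∞) μ (Icc 0 ℓ))
    (hTr : ContDiffOn ℝ (⊤ : ℕ∞) Tr (Icc 0 ℓ))
    (hr : ContDiffOn ℝ (⊤ : ℕ∞) r (Icc 0 ℓ))
    (hκ : ContDiffOn ℝ (⊤ : ℕ∞) κ (Icc 0 ℓ))
    (hρAb : ∀ x ∈ Icc (0:ℝ) ℓ, ρ₀ ≤ ρA x)
    (hμb : ∀ x ∈ Icc (0:ℝ) ℓ, 0 ≤ μ x)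
    (hTrb : ∀ x ∈ Icc (0:ℝ) ℓ, 0 ≤ Tr x)
    (hrb : ∀ x ∈ Icc (0:ℝ) ℓ, r₀ ≤ r x)
    (hκb : ∀ x ∈ Icc (0:ℝ) ℓ, κ₀ ≤ κ x)
    (hF : ContinuousOn (fun p : ℝ × ℝ => F p.1 p.2) (Icc 0 ℓ ×ˢ Icc 0 T))
    (sol : ForwardSol ℓ T ρA μ Tr r κ F) :
    (∀ t ∈ Icc (0:ℝ) T,
      (∫ x in (0:ℝ)..ℓ, (sol.ut x t) ^ 2)
        ≤ (1 / ρ₀) * Real.exp (t / ρ₀) * (∫ t in (0:ℝ)..T, ∫ x in (0:ℝ)..ℓ, (F x t) ^ 2)) ∧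
    (∀ t ∈ Icc (0:ℝ) T,
      (∫ x in (0:ℝ)..ℓ, (sol.ut x t) ^ 2)
        ≤ (1 / ρ₀) * Real.exp (T / ρ₀) * (∫ t in (0:ℝ)..T, ∫ x in (0:ℝ)..ℓ, (F x t) ^ 2)) := by
  have hr_nonneg : ∀ x ∈ Icc 0 ℓ, 0 ≤ r x := fun x hx => hr₀.le.trans (hrb x hx)
  have hκ_nonneg : ∀ x ∈ Icc 0 ℓ, 0 ≤ κ x := fun x hx => hκ₀.le.trans (hκb x hx)
  have hvelocity : ∀ t ∈ Icc (0:ℝ) T, (∫ x in (0:ℝ)..ℓ, (sol.ut x t) ^ 2)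
      ≤ (1 / ρ₀) * Real.exp (t / ρ₀) * (∫ t in (0:ℝ)..T, ∫ x in (0:ℝ)..ℓ, (F x t) ^ 2) := by
    intro t ht
    calc (∫ x in (0:ℝ)..ℓ, (sol.ut x t) ^ 2) ≤ sol.energy t / ρ₀ :=
          sol.integral_ut_sq_le_energy_div hℓ.le hρA.continuousOn hTr.continuousOn
            hr.continuousOn hρ₀ hρAb hTrb hr_nonneg ht
      _ ≤ (∫ t in (0:ℝ)..T, ∫ x in (0:ℝ)..ℓ, (F x t) ^ 2) * Real.exp (t / ρ₀) / ρ₀ := by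
          gcongr
          exact sol.energy_le_mul_exp hℓ.le hρA.continuousOn hμ.continuousOn hTr.continuousOn
            hr.continuousOn hκ.continuousOn hF hρ₀ hρAb hμb hTrb hr_nonneg hκ_nonneg ht
      _ = _ := by ring
  refine ⟨hvelocity, fun t ht => (hvelocity t ht).trans ?_⟩
  have hload : 0 ≤ ∫ s in (0:ℝ)..T, ∫ x in (0:ℝ)..ℓ, F x s ^ 2 :=
    intervalIntegral.integral_nonneg (ht.1.trans ht.2) fun s _ =>
      intervalIntegral.integral_nonneg hℓ.le fun x _ => sq_nonneg (F x s)
  gcongr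
  exact ht.2

/-- **Estimate (9) and the first estimate of Theorem 1.** -/
theorem velocity_energy_estimate
    (ℓ T ρ₀ r₀ κ₀ : ℝ) (hℓ : 0 < ℓ) (hT : 0 < T)
    (hρ₀ : 0 < ρ₀) (hr₀ : 0 < r₀) (hκ₀ : 0 < κ₀)
    (ρA μ Tr r κ : ℝ → ℝ) (F : ℝ → ℝ → ℝ)
    (hρA : ContDiffOn ℝ (⊤ : ℕ∞) ρA (Icc 0 ℓ))
    (hμ : ContDiffOn ℝ (⊤ : ℕ∞) μ (Icc 0 ℓ))
    (hTr : ContDiffOn ℝ (⊤ : ℕ∞) Tr (Icc 0 ℓ))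
    (hr : ContDiffOn ℝ (⊤ : ℕ∞) r (Icc 0 ℓ))
    (hκ : ContDiffOn ℝ (⊤ : ℕ∞) κ (Icc 0 ℓ))
    (hρAb : ∀ x ∈ Icc (0:ℝ) ℓ, ρ₀ ≤ ρA x)
    (hμb : ∀ x ∈ Icc (0:ℝ) ℓ, 0 ≤ μ x)
    (hTrb : ∀ x ∈ Icc (0:ℝ) ℓ, 0 ≤ Tr x)
    (hrb : ∀ x ∈ Icc (0:ℝ) ℓ, r₀ ≤ r x)
    (hκb : ∀ x ∈ Icc (0:ℝ) ℓ, κ₀ ≤ κ x)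
    (hF : ContinuousOn (fun p : ℝ × ℝ => F p.1 p.2) (Icc 0 ℓ ×ˢ Icc 0 T))
    (sol : ForwardSol ℓ T ρA μ Tr r κ F) :
    (∀ t ∈ Icc (0:ℝ) T,
      (∫ x in (0:ℝ)..ℓ, (sol.ut x t) ^ 2)
        ≤ (1 / ρ₀) * Real.exp (t / ρ₀) * (∫ t in (0:ℝ)..T, ∫ x in (0:ℝ)..ℓ, (F x t) ^ 2)) ∧
    (∀ t ∈ Icc (0:ℝ) T,
      (∫ x in (0:ℝ)..ℓ, (sol.ut x t) ^ 2)
        ≤ (1 / ρ₀) * Real.exp (T / ρ₀) * (∫ t in (0:ℝ)..T, ∫ x in (0:ℝ)..ℓ, (F x t) ^ 2)) :=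
  velocity_energy_estimate_general ℓ T ρ₀ r₀ κ₀ hℓ hρ₀ hr₀ hκ₀ ρA μ Tr r κ F hρA hμ hTr hr hκ hρAb
    hμb hTrb hrb hκb hF sol
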